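/- Let 𝒜 = {f_λ : 0 < λ < 1} where f_λ: ℝ²_{≥0} → ℝ²_{≥0} is defined by f_λ(x) = (x₁^λ x₂^{1−λ}, x₂/2). Then the generalized spectral radius of 𝒜 is 1/2 while the joint spectral radius of 𝒜 is 1; in particular r(𝒜) < r̂(𝒜). -/
import Mathlib


open Filter Topology Set

noncomputable section

/-- A wedge in a real normed space: a convex set closed under positive scalar multiplication. -/
def IsWedge {X : Type*} [NormedAddCommGroup X] [NormedSpace ℝ X] (W : Set X) : Prop :=
  Convex ℝ W ∧ ∀ c : ℝ, 0 < c → ∀ x ∈ W, c • x ∈ W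

/-- A closed cone: closed, convex, closed under positive scalar multiplication, K ∩ (−K) = {0}. -/
def IsClosedCone {X : Type*} [NormedAddCommGroup X] [NormedSpace ℝ X] (K : Set X) : Prop :=
  IsClosed K ∧ Convex ℝ K ∧ (∀ c : ℝ, 0 < c → ∀ x ∈ K, c • x ∈ K) ∧ K ∩ (-K) = {0}

/-- A polyhedral cone: intersection of finitely many closed halfspaces through the origin. -/
def IsPolyhedralCone {X : Type*} [NormedAddCommGroup X] [NormedSpace ℝ X] (K : Set X) : Prop :=
  ∃ (k : ℕ) (φ : Fin k → (X →ₗ[ℝ] ℝ)), K = {x | ∀ i, 0 ≤ φ i x}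

/-- `f` maps `W` into itself and is positively homogeneous on `W`. -/
def HomogOn {X : Type*} [NormedAddCommGroup X] [NormedSpace ℝ X] (f : X → X) (W : Set X) : Prop :=
  Set.MapsTo f W W ∧ ∀ c : ℝ, 0 < c → ∀ x ∈ W, f (c • x) = c • f x

/-- `f` is order-preserving with respect to the order induced by the cone `K`. -/
def OrderPresOn {X : Type*} [NormedAddCommGroup X] [NormedSpace ℝ X] (f : X → X) (K : Set X) : Prop :=
  ∀ x ∈ K, ∀ y ∈ K, y - x ∈ K → f y - f x ∈ K

/-- `f` is subadditive on `K`: f(x+y) ≤ f(x)+f(y) in the cone order. -/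
def SubaddOn {X : Type*} [NormedAddCommGroup X] [NormedSpace ℝ X] (f : X → X) (K : Set X) : Prop :=
  ∀ x ∈ K, ∀ y ∈ K, (f x + f y) - f (x + y) ∈ K

/-- The norm of a homogeneous map on `W`: sup of ‖f x‖ over unit vectors of `W`. -/
def opNormW {X : Type*} [NormedAddCommGroup X] (f : X → X) (W : Set X) : ℝ :=
  sSup ((fun x => ‖f x‖) '' {x ∈ W | ‖x‖ = 1})

/-- A bounded homogeneous map on `W`. -/
def BoundedMapOn {X : Type*} [NormedAddCommGroup X] (f : X → X) (W : Set X) : Prop :=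
  ∃ C : ℝ, ∀ x ∈ W, ‖f x‖ ≤ C * ‖x‖

/-- A bounded family of homogeneous maps on `W`. -/
def BoundedFamOn {X : Type*} [NormedAddCommGroup X] (A : Set (X → X)) (W : Set X) : Prop :=
  ∃ C : ℝ, ∀ f ∈ A, ∀ x ∈ W, ‖f x‖ ≤ C * ‖x‖

/-- `famPow A m` = 𝒜^m, the set of m-fold compositions of maps from `A` (with 𝒜^0 = {id}). -/
def famPow {X : Type*} (A : Set (X → X)) : ℕ → Set (X → X)
  | 0 => {id}
  | m + 1 => {h | ∃ f ∈ A, ∃ g ∈ famPow A m, h = f ∘ g}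

/-- The composition of two families of maps. -/
def compFam {X : Type*} (A B : Set (X → X)) : Set (X → X) :=
  {h | ∃ f ∈ A, ∃ g ∈ B, h = f ∘ g}

/-- The Bonsall cone spectral radius r(f) = inf_{n>0} ‖f^n‖^{1/n}. -/
def coneSpecRad {X : Type*} [NormedAddCommGroup X] (f : X → X) (W : Set X) : ℝ :=
  ⨅ n : ℕ+, (opNormW (f^[(n : ℕ)]) W) ^ (((n : ℕ) : ℝ)⁻¹)

/-- sup_{f ∈ 𝒜^m} ‖f‖^{1/m}. -/
def jointTerm {X : Type*} [NormedAddCommGroup X] (A : Set (X → X)) (W : Set X) (m : ℕ) : ℝ :=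
  sSup ((fun f => (opNormW f W) ^ ((m : ℝ)⁻¹)) '' famPow A m)

/-- sup_{f ∈ 𝒜^m} r(f)^{1/m}. -/
def genTerm {X : Type*} [NormedAddCommGroup X] (A : Set (X → X)) (W : Set X) (m : ℕ) : ℝ :=
  sSup ((fun f => (coneSpecRad f W) ^ ((m : ℝ)⁻¹)) '' famPow A m)

/-- The joint spectral radius r̂(𝒜) = inf_{m>0} sup_{f ∈ 𝒜^m} ‖f‖^{1/m}. -/
def jointRad {X : Type*} [NormedAddCommGroup X] (A : Set (X → X)) (W : Set X) : ℝ :=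
  ⨅ m : ℕ+, jointTerm A W (m : ℕ)

/-- The generalized spectral radius r(𝒜) = sup_{m>0} sup_{f ∈ 𝒜^m} r(f)^{1/m}. -/
def genRad {X : Type*} [NormedAddCommGroup X] (A : Set (X → X)) (W : Set X) : ℝ :=
  ⨆ m : ℕ+, genTerm A W (m : ℕ)

/-- β_m = inf_{f ∈ 𝒜^m} ‖f‖. -/
def subBeta {X : Type*} [NormedAddCommGroup X] (A : Set (X → X)) (W : Set X) (m : ℕ) : ℝ :=
  sInf ((fun f => opNormW f W) '' famPow A m)

/-- γ_m = inf_{f ∈ 𝒜^m} r(f). -/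
def subGamma {X : Type*} [NormedAddCommGroup X] (A : Set (X → X)) (W : Set X) (m : ℕ) : ℝ :=
  sInf ((fun f => coneSpecRad f W) '' famPow A m)

/-- F_m^d = f_m ∘ ⋯ ∘ f_1 for a sequence d of maps. -/
def seqComp {X : Type*} (d : ℕ → X → X) : ℕ → X → X
  | 0 => id
  | m + 1 => d m ∘ seqComp d m

/-- The standard cone ℝⁿ_{≥0}. -/
def stdCone (n : ℕ) : Set (Fin n → ℝ) := {x | ∀ i, 0 ≤ x i}

/-- The closed face F_J of the standard cone. -/
def stdFace {n : ℕ} (J : Set (Fin n)) : Set (Fin n → ℝ) :=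
  {x | (∀ i, 0 ≤ x i) ∧ ∀ i ∉ J, x i = 0}

/-- A family of maps on ℝⁿ_{≥0} is irreducible if no non-trivial closed face is invariant
under every member of the family. -/
def IrreducibleFam {n : ℕ} (A : Set ((Fin n → ℝ) → Fin n → ℝ)) : Prop :=
  ¬ ∃ J : Set (Fin n), J.Nonempty ∧ J ≠ Set.univ ∧ ∀ f ∈ A, Set.MapsTo f (stdFace J) (stdFace J)

/-- The maps f_λ(x) = (x₁^λ x₂^{1−λ}, x₂/2) on ℝ²_{≥0}. -/
def fLam (l : ℝ) : (Fin 2 → ℝ) → Fin 2 → ℝ :=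
  fun x => ![(x 0) ^ l * (x 1) ^ (1 - l), x 1 / 2]

-- canonical form
def CF2 (f : (Fin 2 → ℝ) → Fin 2 → ℝ) (p c M : ℝ) : Prop :=
  ∀ x ∈ stdCone 2, f x = ![x 0 ^ p * x 1 ^ (1-p) * (2:ℝ)^(-c), x 1 * (2:ℝ)^(-M)]

lemma mem_stdCone2 {x : Fin 2 → ℝ} (h0 : 0 ≤ x 0) (h1 : 0 ≤ x 1) : x ∈ stdCone 2 := by
  intro i; fin_cases i <;> assumption

lemma vec_eq {u v u' v' : ℝ} (h : u = u') (h' : v = v') : ![u,v] = ![u',v'] := by rw [h, h']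

lemma vec_ext (x : Fin 2 → ℝ) : x = ![x 0, x 1] := by
  funext i; fin_cases i <;> simp

lemma CF2.congr {f p c M p' c' M'} (h : CF2 f p c M) (h1 : p = p') (h2 : c = c') (h3 : M = M') :
    CF2 f p' c' M' := by subst h1; subst h2; subst h3; exact h

lemma rpow_alg {x0 x1 p q c d N : ℝ} (hx0 : 0 ≤ x0) (hx1 : 0 ≤ x1)
    (hp0 : 0 ≤ p) (hp1 : p ≤ 1) (hq1 : q ≤ 1) :
    (x0^q * x1^(1-q) * (2:ℝ)^(-d))^p * ((x1 * (2:ℝ)^(-N))^(1-p)) * (2:ℝ)^(-c)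
      = x0^(q*p) * x1^(1-q*p) * (2:ℝ)^(-(d*p + N*(1-p) + c)) := by
  have h2 : (0:ℝ) ≤ 2 := by norm_num
  have h2d : (0:ℝ) ≤ (2:ℝ)^(-d) := Real.rpow_nonneg h2 _
  have h2N : (0:ℝ) ≤ (2:ℝ)^(-N) := Real.rpow_nonneg h2 _
  have hx0q : (0:ℝ) ≤ x0^q := Real.rpow_nonneg hx0 _
  have hx1q : (0:ℝ) ≤ x1^(1-q) := Real.rpow_nonneg hx1 _
  rw [Real.mul_rpow (mul_nonneg hx0q hx1q) h2d, Real.mul_rpow hx0q hx1q,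
    Real.mul_rpow hx1 h2N,
    ← Real.rpow_mul hx0, ← Real.rpow_mul hx1, ← Real.rpow_mul h2, ← Real.rpow_mul h2]
  have e1 : (1:ℝ) - q*p = (1-q)*p + (1-p) := by ring
  have hx1' : x1^((1-q)*p) * x1^(1-p) = x1^(1-q*p) := by
    rw [e1, Real.rpow_add_of_nonneg hx1 (mul_nonneg (by linarith) hp0) (by linarith)]
  have h2' : (2:ℝ)^(-d*p) * (2:ℝ)^(-N*(1-p)) * (2:ℝ)^(-c) = (2:ℝ)^(-(d*p + N*(1-p) + c)) := by
    rw [← Real.rpow_add (by norm_num : (0:ℝ) < 2), ← Real.rpow_add (by norm_num : (0:ℝ) < 2)]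
    ring_nf
  calc x0^(q*p) * x1^((1-q)*p) * (2:ℝ)^(-d*p) * (x1^(1-p) * (2:ℝ)^(-N*(1-p))) * (2:ℝ)^(-c)
      = (x0^(q*p)) * (x1^((1-q)*p) * x1^(1-p)) * ((2:ℝ)^(-d*p) * (2:ℝ)^(-N*(1-p)) * (2:ℝ)^(-c)) := by ring
    _ = _ := by rw [hx1', h2']

lemma CF2.mapsTo {f p c M} (h : CF2 f p c M) : Set.MapsTo f (stdCone 2) (stdCone 2) := by
  intro x hx
  rw [h x hx]
  refine mem_stdCone2 ?_ ?_ <;> simp [Matrix.cons_val_zero, Matrix.cons_val_one]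
  · exact mul_nonneg (mul_nonneg (Real.rpow_nonneg (hx 0) _) (Real.rpow_nonneg (hx 1) _))
      (Real.rpow_nonneg (by norm_num) _)
  · exact mul_nonneg (hx 1) (Real.rpow_nonneg (by norm_num) _)

lemma CF2.comp {f g p c M q d N} (hf : CF2 f p c M) (hg : CF2 g q d N)
    (hp0 : 0 ≤ p) (hp1 : p ≤ 1) (hq1 : q ≤ 1) :
    CF2 (f ∘ g) (q*p) (d*p + N*(1-p) + c) (N+M) := by
  intro x hx
  have hgx := hg x hx
  have hmem : g x ∈ stdCone 2 := hg.mapsTo hx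
  have hfgx := hf (g x) hmem
  simp only [Function.comp_apply]
  rw [hfgx, hgx]
  simp only [Matrix.cons_val_zero, Matrix.cons_val_one, Matrix.head_cons]
  refine vec_eq ?_ ?_
  · exact rpow_alg (hx 0) (hx 1) hp0 hp1 hq1
  · rw [mul_assoc, ← Real.rpow_add (by norm_num : (0:ℝ) < 2)]
    ring_nf

lemma CF2_fLam {l : ℝ} : CF2 (fLam l) l 0 1 := by
  intro x hx
  simp only [fLam]
  refine vec_eq ?_ ?_
  · rw [neg_zero, Real.rpow_zero, mul_one]
  · rw [Real.rpow_neg_one]; ring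

abbrev Aset : Set ((Fin 2 → ℝ) → Fin 2 → ℝ) := {g | ∃ l : ℝ, 0 < l ∧ l < 1 ∧ g = fLam l}

lemma famPow_CF : ∀ m : ℕ, ∀ f ∈ famPow Aset (m+1),
    ∃ p c : ℝ, 0 < p ∧ p < 1 ∧ 0 ≤ c ∧ CF2 f p c ((m:ℝ)+1) := by
  intro m
  induction m with
  | zero =>
    rintro f ⟨g, ⟨l, hl0, hl1, rfl⟩, h, hh, rfl⟩
    have : h = id := hh
    subst this
    refine ⟨l, 0, hl0, hl1, le_refl _, ?_⟩
    have : fLam l ∘ id = fLam l := rfl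
    rw [this]
    exact CF2_fLam.congr rfl rfl (by norm_num)
  | succ m ih =>
    rintro f ⟨g, ⟨l, hl0, hl1, rfl⟩, h, hh, rfl⟩
    obtain ⟨q, d, hq0, hq1, hd, hCF⟩ := ih h hh
    refine ⟨q*l, d*l + ((m:ℝ)+1)*(1-l) + 0, mul_pos hq0 hl0, by nlinarith, ?_, ?_⟩
    · have h1 : 0 ≤ d*l := mul_nonneg hd hl0.le
      have h2 : 0 ≤ ((m:ℝ)+1)*(1-l) := mul_nonneg (by positivity) (by linarith)
      linarith
    · have hc := (CF2_fLam (l := l)).comp hCF hl0.le hl1.le hq1.le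
      exact hc.congr rfl rfl (by push_cast; ring)

lemma CF2.iter {f p c M} (hf : CF2 f p c M) (hp0 : 0 < p) (hp1 : p < 1)
    (hc : 0 ≤ c) (hM : 0 ≤ M) :
    ∀ n : ℕ, ∃ cn : ℝ, 0 ≤ cn ∧ M*((n:ℝ)+1) - cn ≤ M/(1-p) ∧
      CF2 (f^[n+1]) (p^(n+1)) cn (M*((n:ℝ)+1)) := by
  have h1p : (0:ℝ) < 1 - p := by linarith
  intro n
  induction n with
  | zero =>
    refine ⟨c, hc, ?_, ?_⟩
    · have : M ≤ M/(1-p) := by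
        rw [le_div_iff₀ h1p]; nlinarith
      linarith
    · simp only [zero_add, pow_one, Nat.cast_zero]
      exact hf.congr rfl rfl (by ring)
  | succ n ih =>
    obtain ⟨cn, hcn0, hcnb, hCF⟩ := ih
    have hq1 : p^(n+1) ≤ 1 := pow_le_one₀ hp0.le hp1.le
    have hc2 := hf.comp hCF hp0.le hp1.le hq1
    rw [← Function.iterate_succ' f (n+1)] at hc2
    refine ⟨cn*p + (M*((n:ℝ)+1))*(1-p) + c, ?_, ?_, ?_⟩
    · have h1 : 0 ≤ cn*p := mul_nonneg hcn0 hp0.le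
      have h2 : 0 ≤ (M*((n:ℝ)+1))*(1-p) := mul_nonneg (mul_nonneg hM (by positivity)) h1p.le
      linarith
    · have hD : (M/(1-p)) * (1-p) = M := div_mul_cancel₀ M (by linarith)
      push_cast
      nlinarith [mul_le_mul_of_nonneg_left hcnb hp0.le]
    · exact hc2.congr (by rw [← pow_succ]) rfl (by push_cast; ring)

lemma norm_pair_le {u v r : ℝ} (hu : |u| ≤ r) (hv : |v| ≤ r) : ‖![u,v]‖ ≤ r := by
  have hr : 0 ≤ r := (abs_nonneg u).trans hu
  rw [pi_norm_le_iff_of_nonneg hr]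
  intro i; fin_cases i <;> simpa [Real.norm_eq_abs]

lemma fst_le_norm (u v : ℝ) : |u| ≤ ‖![u,v]‖ := by
  simpa [Real.norm_eq_abs] using norm_le_pi_norm ![u,v] 0

lemma snd_le_norm (u v : ℝ) : |v| ≤ ‖![u,v]‖ := by
  simpa [Real.norm_eq_abs] using norm_le_pi_norm ![u,v] 1

lemma norm_pair_eq {u v : ℝ} (h0 : 0 ≤ u) (h1 : u ≤ v) : ‖![u,v]‖ = v := by
  refine le_antisymm (norm_pair_le ?_ ?_) ?_
  · rw [abs_of_nonneg h0]; exact h1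
  · rw [abs_of_nonneg (h0.trans h1)]
  · calc v = |v| := (abs_of_nonneg (h0.trans h1)).symm
      _ ≤ _ := snd_le_norm u v

lemma one_mem : (![1,1] : Fin 2 → ℝ) ∈ stdCone 2 := mem_stdCone2 (by norm_num) (by norm_num)
lemma one_norm : ‖(![1,1] : Fin 2 → ℝ)‖ = 1 := norm_pair_eq (by norm_num) (by norm_num)
lemma e2_mem : (![0,1] : Fin 2 → ℝ) ∈ stdCone 2 := mem_stdCone2 (by norm_num) (by norm_num)
lemma e2_norm : ‖(![0,1] : Fin 2 → ℝ)‖ = 1 := norm_pair_eq (by norm_num) (by norm_num)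

lemma CF2.norm_le {f p c M} (hf : CF2 f p c M) (hp0 : 0 ≤ p) (hp1 : p ≤ 1)
    {x : Fin 2 → ℝ} (hx : x ∈ stdCone 2) (hnx : ‖x‖ = 1) :
    ‖f x‖ ≤ max ((2:ℝ)^(-c)) ((2:ℝ)^(-M)) := by
  have hx0 := hx 0
  have hx1 := hx 1
  have hx0' : x 0 ≤ 1 := by
    have := fst_le_norm (x 0) (x 1); rw [← vec_ext x, hnx] at this
    calc x 0 ≤ |x 0| := le_abs_self _
      _ ≤ 1 := this
  have hx1' : x 1 ≤ 1 := by
    have := snd_le_norm (x 0) (x 1); rw [← vec_ext x, hnx] at this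
    calc x 1 ≤ |x 1| := le_abs_self _
      _ ≤ 1 := this
  rw [hf x hx]
  refine norm_pair_le ?_ ?_
  · rw [abs_of_nonneg (by positivity)]
    refine le_max_of_le_left ?_
    have h1 : x 0 ^ p * x 1 ^ (1-p) ≤ 1 :=
      mul_le_one₀ (Real.rpow_le_one hx0 hx0' hp0) (Real.rpow_nonneg hx1 _)
        (Real.rpow_le_one hx1 hx1' (by linarith))
    calc x 0 ^ p * x 1 ^ (1-p) * (2:ℝ)^(-c)
        ≤ 1 * (2:ℝ)^(-c) := mul_le_mul_of_nonneg_right h1 (Real.rpow_nonneg (by norm_num) _)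
      _ = (2:ℝ)^(-c) := one_mul _
  · rw [abs_of_nonneg (mul_nonneg hx1 (Real.rpow_nonneg (by norm_num) _))]
    exact le_max_of_le_right (mul_le_of_le_one_left (Real.rpow_nonneg (by norm_num) _) hx1')

lemma CF2.bddAbove {f p c M} (hf : CF2 f p c M) (hp0 : 0 ≤ p) (hp1 : p ≤ 1) :
    BddAbove ((fun x => ‖f x‖) '' {x ∈ stdCone 2 | ‖x‖ = 1}) := by
  refine ⟨max ((2:ℝ)^(-c)) ((2:ℝ)^(-M)), ?_⟩
  rintro _ ⟨x, ⟨hx, hnx⟩, rfl⟩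
  exact hf.norm_le hp0 hp1 hx hnx

lemma CF2.opNormW_le {f p c M} (hf : CF2 f p c M) (hp0 : 0 ≤ p) (hp1 : p ≤ 1) :
    opNormW f (stdCone 2) ≤ max ((2:ℝ)^(-c)) ((2:ℝ)^(-M)) := by
  refine Real.sSup_le ?_ (le_max_of_le_left (Real.rpow_nonneg (by norm_num) _))
  rintro _ ⟨x, ⟨hx, hnx⟩, rfl⟩
  exact hf.norm_le hp0 hp1 hx hnx

lemma opNormW_ge {f : (Fin 2 → ℝ) → Fin 2 → ℝ}
    (hb : BddAbove ((fun x => ‖f x‖) '' {x ∈ stdCone 2 | ‖x‖ = 1}))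
    {y : Fin 2 → ℝ} (hy : y ∈ stdCone 2) (hny : ‖y‖ = 1) :
    ‖f y‖ ≤ opNormW f (stdCone 2) :=
  le_csSup hb ⟨y, ⟨hy, hny⟩, rfl⟩

lemma opNormW_nonneg (f : (Fin 2 → ℝ) → Fin 2 → ℝ) (W : Set (Fin 2 → ℝ)) :
    0 ≤ opNormW f W := by
  refine Real.sSup_nonneg ?_
  rintro _ ⟨x, _, rfl⟩; exact norm_nonneg _

lemma CF2.iter_norm_ge {f : (Fin 2 → ℝ) → Fin 2 → ℝ} {p M : ℝ} {k : ℕ} {cn : ℝ}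
    (hCF : CF2 (f^[k+1]) (p^(k+1)) cn (M*((k:ℝ)+1))) (hp0 : 0 < p) (hp1 : p < 1) :
    (2:ℝ)^(-(M*((k:ℝ)+1))) ≤ opNormW (f^[k+1]) (stdCone 2) := by
  have hval := hCF ![0,1] e2_mem
  simp only [Matrix.cons_val_zero, Matrix.cons_val_one, Matrix.head_cons] at hval
  rw [Real.zero_rpow (by positivity), zero_mul, zero_mul, one_mul] at hval
  have hn : ‖f^[k+1] ![0,1]‖ = (2:ℝ)^(-(M*((k:ℝ)+1))) := by
    rw [hval]; exact norm_pair_eq (le_refl 0) (Real.rpow_nonneg (by norm_num) _)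
  have hb := hCF.bddAbove (pow_pos hp0 _).le (pow_le_one₀ hp0.le hp1.le)
  rw [← hn]
  exact opNormW_ge hb e2_mem e2_norm

lemma CF2.coneSpecRad_eq {f p c M} (hf : CF2 f p c M) (hp0 : 0 < p) (hp1 : p < 1)
    (hc : 0 ≤ c) (hM : 0 ≤ M) :
    coneSpecRad f (stdCone 2) = (2:ℝ)^(-M) := by
  have h1p : (0:ℝ) < 1 - p := by linarith
  set D : ℝ := M/(1-p) with hD
  have hD0 : 0 ≤ D := div_nonneg hM h1p.le
  refine le_antisymm ?_ ?_
  · -- upper bound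
    have key : ∀ k : ℕ, coneSpecRad f (stdCone 2) ≤ (2:ℝ)^(D/((k:ℝ)+1) - M) := by
      intro k
      obtain ⟨cn, hcn0, hcnb, hCF⟩ := hf.iter hp0 hp1 hc hM k
      have hq0 : 0 < p^(k+1) := pow_pos hp0 _
      have hq1 : p^(k+1) ≤ 1 := pow_le_one₀ hp0.le hp1.le
      have hle : opNormW (f^[k+1]) (stdCone 2) ≤ (2:ℝ)^(D - M*((k:ℝ)+1)) := by
        refine (hCF.opNormW_le hq0.le hq1).trans (max_le ?_ ?_)
        · exact Real.rpow_le_rpow_of_exponent_le one_le_two (by linarith)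
        · exact Real.rpow_le_rpow_of_exponent_le one_le_two (by linarith)
      have hstep : coneSpecRad f (stdCone 2)
          ≤ (opNormW (f^[((⟨k+1, Nat.succ_pos k⟩ : ℕ+) : ℕ)]) (stdCone 2)) ^ ((((⟨k+1, Nat.succ_pos k⟩ : ℕ+) : ℕ) : ℝ)⁻¹) := by
        refine ciInf_le ⟨0, ?_⟩ _
        rintro _ ⟨n, rfl⟩
        exact Real.rpow_nonneg (opNormW_nonneg _ _) _
      refine hstep.trans ?_
      have hcast : (((⟨k+1, Nat.succ_pos k⟩ : ℕ+) : ℕ) : ℝ) = (k:ℝ)+1 := by push_cast; ring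
      rw [hcast]
      calc (opNormW (f^[k+1]) (stdCone 2)) ^ (((k:ℝ)+1)⁻¹)
          ≤ ((2:ℝ)^(D - M*((k:ℝ)+1))) ^ (((k:ℝ)+1)⁻¹) :=
            Real.rpow_le_rpow (opNormW_nonneg _ _) hle (by positivity)
        _ = (2:ℝ)^((D - M*((k:ℝ)+1)) * ((k:ℝ)+1)⁻¹) := by
            rw [← Real.rpow_mul (by norm_num : (0:ℝ) ≤ 2)]
        _ = (2:ℝ)^(D/((k:ℝ)+1) - M) := by
            congr 1
            have hk : ((k:ℝ)+1) ≠ 0 := by positivity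
            field_simp
    have hlim : Tendsto (fun k : ℕ => (2:ℝ)^(D/((k:ℝ)+1) - M)) atTop (𝓝 ((2:ℝ)^(-M))) := by
      have hden : Tendsto (fun k : ℕ => (k:ℝ)+1) atTop atTop :=
        tendsto_atTop_add_const_right _ 1 tendsto_natCast_atTop_atTop
      have h1 : Tendsto (fun k : ℕ => D/((k:ℝ)+1) - M) atTop (𝓝 (0 - M)) :=
        (tendsto_const_nhds.div_atTop hden).sub_const M
      rw [zero_sub] at h1
      exact (Real.continuousAt_const_rpow (by norm_num : (2:ℝ) ≠ 0)).tendsto.comp h1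
    exact ge_of_tendsto' hlim key
  · -- lower bound
    refine le_ciInf ?_
    intro n
    obtain ⟨k, hk⟩ : ∃ k, (n:ℕ) = k+1 := ⟨(n:ℕ)-1, (Nat.succ_pred_eq_of_pos n.pos).symm⟩
    obtain ⟨cn, hcn0, hcnb, hCF⟩ := hf.iter hp0 hp1 hc hM k
    have hlow := hCF.iter_norm_ge hp0 hp1
    rw [hk]
    have hcast : (((k+1:ℕ)) : ℝ) = (k:ℝ)+1 := by push_cast; ring
    calc (2:ℝ)^(-M) = ((2:ℝ)^(-(M*((k:ℝ)+1)))) ^ (((k+1:ℕ):ℝ)⁻¹) := by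
          rw [← Real.rpow_mul (by norm_num : (0:ℝ) ≤ 2), hcast]
          congr 1
          field_simp
      _ ≤ _ := Real.rpow_le_rpow (Real.rpow_nonneg (by norm_num) _) hlow (by positivity)


lemma iterate_mem_famPow {g : (Fin 2 → ℝ) → Fin 2 → ℝ} (hg : g ∈ Aset) :
    ∀ k : ℕ, g^[k] ∈ famPow Aset k := by
  intro k
  induction k with
  | zero => exact rfl
  | succ k ih => exact ⟨g, hg, g^[k], ih, Function.iterate_succ' g k⟩

lemma half_mem : fLam (1/2) ∈ Aset := ⟨1/2, by norm_num, by norm_num, rfl⟩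

lemma rad_cancel (m : ℕ) : (((2:ℝ))^(-((m:ℝ)+1))) ^ (((m+1:ℕ):ℝ))⁻¹ = 1/2 := by
  rw [← Real.rpow_mul (by norm_num : (0:ℝ) ≤ 2)]
  have hm : ((m+1:ℕ):ℝ) = (m:ℝ)+1 := by push_cast; ring
  rw [hm]
  have : -((m:ℝ)+1) * ((m:ℝ)+1)⁻¹ = -1 := by
    have : ((m:ℝ)+1) ≠ 0 := by positivity
    field_simp
  rw [this, Real.rpow_neg_one]
  norm_num

lemma genTerm_eq (m : ℕ) : genTerm Aset (stdCone 2) (m+1) = 1/2 := by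
  have himg : (fun f => (coneSpecRad f (stdCone 2)) ^ (((m+1:ℕ) : ℝ)⁻¹)) '' famPow Aset (m+1)
      = {(1/2 : ℝ)} := by
    apply Set.Subset.antisymm
    · rintro _ ⟨f, hf, rfl⟩
      obtain ⟨p, c, hp0, hp1, hc, hCF⟩ := famPow_CF m f hf
      have := hCF.coneSpecRad_eq hp0 hp1 hc (by positivity)
      simp only [this, Set.mem_singleton_iff]
      exact rad_cancel m
    · rintro x hx
      rw [Set.mem_singleton_iff] at hx
      subst hx
      refine ⟨(fLam (1/2))^[m+1], iterate_mem_famPow half_mem (m+1), ?_⟩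
      obtain ⟨p, c, hp0, hp1, hc, hCF⟩ := famPow_CF m _ (iterate_mem_famPow half_mem (m+1))
      have := hCF.coneSpecRad_eq hp0 hp1 hc (by positivity)
      simp only [this]
      exact rad_cancel m
  rw [genTerm, himg, csSup_singleton]

lemma CF2.opNormW_le_one {f : (Fin 2 → ℝ) → Fin 2 → ℝ} {p c M : ℝ} (hf : CF2 f p c M)
    (hp0 : 0 < p) (hp1 : p ≤ 1) (hc : 0 ≤ c) (hM : 0 ≤ M) :
    opNormW f (stdCone 2) ≤ 1 := by
  refine (hf.opNormW_le hp0.le hp1).trans (max_le ?_ ?_) <;>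
    exact Real.rpow_le_one_of_one_le_of_nonpos one_le_two (by linarith)

lemma jointTerm_le (m : ℕ) : jointTerm Aset (stdCone 2) (m+1) ≤ 1 := by
  refine Real.sSup_le ?_ zero_le_one
  rintro _ ⟨f, hf, rfl⟩
  obtain ⟨p, c, hp0, hp1, hc, hCF⟩ := famPow_CF m f hf
  exact Real.rpow_le_one (opNormW_nonneg _ _)
    (hCF.opNormW_le_one hp0 hp1.le hc (by positivity)) (by positivity)

lemma one_sub_le_rpow {x : ℝ} (hx : 0 ≤ x) : 1 - x ≤ (2:ℝ)^(-x) := by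
  rw [Real.rpow_def_of_pos (by norm_num : (0:ℝ) < 2)]
  have h1 := Real.add_one_le_exp (Real.log 2 * -x)
  have h2 : Real.log 2 ≤ 1 := by
    have := Real.log_le_sub_one_of_pos (by norm_num : (0:ℝ) < 2)
    linarith
  have h3 : 0 < Real.log 2 := Real.log_pos (by norm_num)
  nlinarith

lemma iterate_one_lb {l : ℝ} (hl0 : 0 < l) (hl1 : l < 1) :
    ∀ k : ℕ, ∃ a : ℝ, (2:ℝ)^(-((1-l)*(k:ℝ)^2)) ≤ a ∧ a ≤ 1 ∧
      (fLam l)^[k] ![1,1] = ![a, (2:ℝ)^(-(k:ℝ))] := by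
  intro k
  induction k with
  | zero =>
    refine ⟨1, by norm_num, le_refl 1, ?_⟩
    simp only [Function.iterate_zero, id_eq, Nat.cast_zero, neg_zero, Real.rpow_zero]
  | succ k ih =>
    obtain ⟨a, hal, ha1, heq⟩ := ih
    have hapos : 0 < a := lt_of_lt_of_le (Real.rpow_pos_of_pos (by norm_num) _) hal
    have hbl : (0:ℝ) < (2:ℝ)^(-(k:ℝ)) := Real.rpow_pos_of_pos (by norm_num) _
    have hb1 : (2:ℝ)^(-(k:ℝ)) ≤ 1 :=
      Real.rpow_le_one_of_one_le_of_nonpos one_le_two (neg_nonpos.mpr (Nat.cast_nonneg k))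
    refine ⟨a^l * ((2:ℝ)^(-(k:ℝ)))^(1-l), ?_, ?_, ?_⟩
    · -- lower bound
      have hcast : ((k+1:ℕ):ℝ) = (k:ℝ)+1 := by push_cast; ring
      rw [hcast]
      have h1 : a ≤ a^l := by
        have := Real.rpow_le_rpow_of_exponent_ge hapos ha1 hl1.le
        rwa [Real.rpow_one] at this
      have h2 : ((2:ℝ)^(-(k:ℝ)))^(1-l) = (2:ℝ)^(-(k:ℝ)*(1-l)) := by
        rw [← Real.rpow_mul (by norm_num : (0:ℝ) ≤ 2)]
      calc (2:ℝ)^(-((1-l)*((k:ℝ)+1)^2))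
          ≤ (2:ℝ)^(-((1-l)*(k:ℝ)^2) + -(k:ℝ)*(1-l)) := by
            refine Real.rpow_le_rpow_of_exponent_le one_le_two ?_
            have hk0 : (0:ℝ) ≤ (k:ℝ) := Nat.cast_nonneg k
            nlinarith [hl1.le, hk0]
        _ = (2:ℝ)^(-((1-l)*(k:ℝ)^2)) * (2:ℝ)^(-(k:ℝ)*(1-l)) :=
            Real.rpow_add (by norm_num) _ _
        _ ≤ a^l * ((2:ℝ)^(-(k:ℝ)))^(1-l) := by
            rw [h2]
            exact mul_le_mul (hal.trans h1) (le_refl _)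
              (Real.rpow_nonneg (by norm_num) _) (by positivity)
    · exact mul_le_one₀ (Real.rpow_le_one hapos.le ha1 hl0.le)
        (Real.rpow_nonneg hbl.le _)
        (Real.rpow_le_one hbl.le hb1 (by linarith))
    · rw [Function.iterate_succ_apply', heq]
      simp only [fLam, Matrix.cons_val_zero, Matrix.cons_val_one, Matrix.head_cons]
      refine vec_eq rfl ?_
      rw [show ((k:ℕ)+1 : ℕ) = k+1 from rfl]
      have : (2:ℝ)^(-((k:ℝ)+1)) = (2:ℝ)^(-(k:ℝ)) * (2:ℝ)^(-(1:ℝ)) := by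
        rw [← Real.rpow_add (by norm_num : (0:ℝ) < 2)]; ring_nf
      push_cast
      rw [this, Real.rpow_neg_one]
      ring

lemma jointTerm_ge (m : ℕ) : 1 ≤ jointTerm Aset (stdCone 2) (m+1) := by
  refine le_of_forall_pos_le_add ?_
  intro ε hε
  set l : ℝ := max (1/2) (1 - ε/((m:ℝ)+1)) with hldef
  have hm1 : (0:ℝ) < (m:ℝ)+1 := by positivity
  have hl0 : 0 < l := lt_of_lt_of_le (by norm_num) (le_max_left _ _)
  have hl1 : l < 1 := by
    refine max_lt (by norm_num) ?_
    have : 0 < ε/((m:ℝ)+1) := by positivity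
    linarith
  have hl' : (1 - l) * ((m:ℝ)+1) ≤ ε := by
    have h1 : 1 - ε/((m:ℝ)+1) ≤ l := le_max_right _ _
    have h2 : 1 - l ≤ ε/((m:ℝ)+1) := by linarith
    calc (1-l) * ((m:ℝ)+1) ≤ (ε/((m:ℝ)+1)) * ((m:ℝ)+1) :=
          mul_le_mul_of_nonneg_right h2 hm1.le
      _ = ε := div_mul_cancel₀ ε hm1.ne'
  set f := (fLam l)^[m+1] with hfdef
  have hfmem : f ∈ famPow Aset (m+1) := iterate_mem_famPow ⟨l, hl0, hl1, rfl⟩ (m+1)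
  obtain ⟨a, hal, ha1, heq⟩ := iterate_one_lb hl0 hl1 (m+1)
  obtain ⟨p, c, hp0, hp1, hc, hCF⟩ := famPow_CF m f hfmem
  have hb := hCF.bddAbove hp0.le hp1.le
  have hnorm : a ≤ opNormW f (stdCone 2) := by
    have h1 : a ≤ ‖f ![1,1]‖ := by
      rw [hfdef, heq]
      have ha0 : 0 ≤ a := (lt_of_lt_of_le (Real.rpow_pos_of_pos (by norm_num) _) hal).le
      calc a = |a| := (abs_of_nonneg ha0).symm
        _ ≤ _ := fst_le_norm _ _
    exact h1.trans (opNormW_ge hb one_mem one_norm)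
  have hcast : ((m+1:ℕ):ℝ) = (m:ℝ)+1 := by push_cast; ring
  have hkey : 1 - ε ≤ (opNormW f (stdCone 2)) ^ (((m+1:ℕ):ℝ)⁻¹) := by
    have h2 : ((2:ℝ)^(-((1-l)*(((m+1:ℕ)):ℝ)^2))) ^ (((m+1:ℕ):ℝ)⁻¹)
        = (2:ℝ)^(-((1-l)*((m:ℝ)+1))) := by
      rw [← Real.rpow_mul (by norm_num : (0:ℝ) ≤ 2), hcast]
      congr 1
      field_simp
    calc (1:ℝ) - ε ≤ 1 - (1-l)*((m:ℝ)+1) := by linarith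
      _ ≤ (2:ℝ)^(-((1-l)*((m:ℝ)+1))) :=
          one_sub_le_rpow (mul_nonneg (by linarith) hm1.le)
      _ = ((2:ℝ)^(-((1-l)*(((m+1:ℕ)):ℝ)^2))) ^ (((m+1:ℕ):ℝ)⁻¹) := h2.symm
      _ ≤ (opNormW f (stdCone 2)) ^ (((m+1:ℕ):ℝ)⁻¹) := by
          refine Real.rpow_le_rpow (Real.rpow_nonneg (by norm_num) _) ?_ (by positivity)
          calc (2:ℝ)^(-((1-l)*(((m+1:ℕ)):ℝ)^2)) ≤ a := by
                rw [hcast] at hal ⊢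
                exact hal
            _ ≤ _ := hnorm
  have hmem2 : (opNormW f (stdCone 2)) ^ (((m+1:ℕ):ℝ)⁻¹)
      ∈ (fun f => (opNormW f (stdCone 2)) ^ (((m+1:ℕ):ℝ)⁻¹)) '' famPow Aset (m+1) :=
    ⟨f, hfmem, rfl⟩
  have hbdd : BddAbove ((fun f => (opNormW f (stdCone 2)) ^ (((m+1:ℕ):ℝ)⁻¹)) '' famPow Aset (m+1)) := by
    refine ⟨1, ?_⟩
    rintro _ ⟨g, hg, rfl⟩
    obtain ⟨p', c', hp0', hp1', hc', hCF'⟩ := famPow_CF m g hg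
    exact Real.rpow_le_one (opNormW_nonneg _ _)
      (hCF'.opNormW_le_one hp0' hp1'.le hc' (by positivity)) (by positivity)
  calc (1:ℝ) ≤ ((opNormW f (stdCone 2)) ^ (((m+1:ℕ):ℝ)⁻¹)) + ε := by linarith
    _ ≤ jointTerm Aset (stdCone 2) (m+1) + ε := by
        have := le_csSup hbdd hmem2
        unfold jointTerm
        linarith


theorem statement8 :
    genRad {g | ∃ l : ℝ, 0 < l ∧ l < 1 ∧ g = fLam l} (stdCone 2) = 1 / 2 ∧
    jointRad {g | ∃ l : ℝ, 0 < l ∧ l < 1 ∧ g = fLam l} (stdCone 2) = 1 := by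
  constructor
  · have h : ∀ m : ℕ+, genTerm Aset (stdCone 2) (m:ℕ) = 1/2 := by
      intro m
      obtain ⟨k, hk⟩ : ∃ k, (m:ℕ) = k+1 := ⟨(m:ℕ)-1, (Nat.succ_pred_eq_of_pos m.pos).symm⟩
      rw [hk]; exact genTerm_eq k
    show genRad Aset (stdCone 2) = 1/2
    rw [genRad, show (fun m : ℕ+ => genTerm Aset (stdCone 2) (m:ℕ)) = fun _ => (1/2:ℝ) from funext h]
    exact ciSup_const
  · have h : ∀ m : ℕ+, jointTerm Aset (stdCone 2) (m:ℕ) = 1 := by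
      intro m
      obtain ⟨k, hk⟩ : ∃ k, (m:ℕ) = k+1 := ⟨(m:ℕ)-1, (Nat.succ_pred_eq_of_pos m.pos).symm⟩
      rw [hk]; exact le_antisymm (jointTerm_le k) (jointTerm_ge k)
    show jointRad Aset (stdCone 2) = 1
    rw [jointRad, show (fun m : ℕ+ => jointTerm Aset (stdCone 2) (m:ℕ)) = fun _ => (1:ℝ) from funext h]
    exact ciInf_const
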